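/- Let 0 ≤ r' ≤ r and O, O' ∈ ℝ^d with ‖O − O'‖ = r + r' − h for some 0 ≤ h ≤ r'. Then the d-dimensional Lebesgue measure of B(O, r) ∩ B(O', r') is at least (ω_{d−1} / (d · 2^{(d−1)/2})) · h^{(d+1)/2} · (r')^{(d−1)/2}, where ω_{d−1} is the volume of the (d−1)-dimensional unit Euclidean ball. -/

import Mathlib

/-!
Put `O` at the origin and `O'` at distance `D = r + r' - h` on the first axis. The lens
`B(O, r) ∩ B(O', r')` meets the axis in `[r - h, r]`, and the circle `∂B(O, r) ∩ ∂B(O', r')` sits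
over the abscissa `t₀ = (D² + r² - r'²) / 2D` with radius `ℓ`, where
`ℓ² = (r + r' + D)(r + r' - D)(D + r - r')(D - r + r') / 4D² ≥ h r' / 2`.
The squared radius of a cross-section of either ball is a concave quadratic in the abscissa, so
the lens contains the double cone over that `(d-1)`-disc with apexes `r - h` and `r`. By Fubini
its volume is at least `ω_{d-1} ℓ^{d-1} h / d`.
-/

open Set Metric ENNReal NNReal

noncomputable section

abbrev Euc (D : ℕ) := EuclideanSpace ℝ (Fin D)

/-- The medial axis of a set `S`: ambient points having at least two nearest points on `S`. -/
def medialAxis {D : ℕ} (S : Set (Euc D)) : Set (Euc D) :=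
  {z | ∃ x ∈ S, ∃ y ∈ S, x ≠ y ∧ dist z x = Metric.infDist z S ∧ dist z y = Metric.infDist z S}

/-- The reach of a set: the infimal distance from its medial axis to the set. -/
def reach {D : ℕ} (S : Set (Euc D)) : ℝ≥0∞ :=
  ⨅ z ∈ medialAxis S, EMetric.infEdist z S

/-- Geodesic (intrinsic) distance in `S`: infimum of lengths of continuous paths in `S`
joining `x` to `y` (`∞` if there is none). -/
def geodesicDist {D : ℕ} (S : Set (Euc D)) (x y : Euc D) : ℝ≥0∞ :=
  ⨅ (γ : ℝ → Euc D) (_ : ContinuousOn γ (Set.Icc 0 1))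
    (_ : Set.MapsTo γ (Set.Icc 0 1) S) (_ : γ 0 = x) (_ : γ 1 = y),
    eVariationOn γ (Set.Icc 0 1)

/-- The model space `ℝ^d × {0}^{D-d}` inside `ℝ^D`. -/
def fullModel (D d : ℕ) : Set (Euc D) := {x | ∀ i : Fin D, d ≤ (i : ℕ) → x i = 0}

/-- The model half-space `ℝ^{d-1} × ℝ₊ × {0}^{D-d}` inside `ℝ^D`. -/
def halfModel (D d : ℕ) : Set (Euc D) :=
  {x | (∀ i : Fin D, d ≤ (i : ℕ) → x i = 0) ∧ ∃ i : Fin D, (i : ℕ) + 1 = d ∧ 0 ≤ x i}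

/-- `p` is a point of `M` around which `M` is C²-parametrized by the given model set. -/
def IsChartedPoint {D : ℕ} (model : Set (Euc D)) (M : Set (Euc D)) (p : Euc D) : Prop :=
  ∃ (U V : Set (Euc D)) (Ψ Φ : Euc D → Euc D),
    IsOpen U ∧ IsOpen V ∧ (0 : Euc D) ∈ U ∧ p ∈ V ∧
    ContDiffOn ℝ 2 Ψ U ∧ ContDiffOn ℝ 2 Φ V ∧ Set.BijOn Ψ U V ∧
    (∀ x ∈ U, Φ (Ψ x) = x) ∧ Ψ 0 = p ∧ Ψ '' (U ∩ model) = M ∩ V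

/-- `M ⊆ ℝ^D` is a `d`-dimensional C² submanifold with (possibly empty) boundary. -/
def IsC2SubmanifoldWithBoundary {D : ℕ} (d : ℕ) (M : Set (Euc D)) : Prop :=
  IsClosed M ∧ ∀ p ∈ M, IsChartedPoint (fullModel D d) M p ∨ IsChartedPoint (halfModel D d) M p

/-- The (differential) boundary `∂M` of `M`: points carrying a half-space chart. -/
def boundaryOf {D : ℕ} (d : ℕ) (M : Set (Euc D)) : Set (Euc D) :=
  {p ∈ M | IsChartedPoint (halfModel D d) M p}

/-- The tangent space of `M` at `x`: the linear span of the tangent cone. -/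
def tangentSpaceAt {D : ℕ} (M : Set (Euc D)) (x : Euc D) : Submodule ℝ (Euc D) :=
  Submodule.span ℝ (tangentConeAt ℝ M x)

/-- The normal cone of `M` at `x`: the dual cone of the tangent cone. -/
def normalConeAt {D : ℕ} (M : Set (Euc D)) (x : Euc D) : Set (Euc D) :=
  {v | ∀ u ∈ tangentConeAt ℝ M x, (inner ℝ u v : ℝ) ≤ 0}

/-- Orthogonal projection onto a subspace, as a continuous linear map `E →L[ℝ] E`. -/
def projSub {D : ℕ} (T : Submodule ℝ (Euc D)) : Euc D →L[ℝ] Euc D :=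
  T.subtypeL.comp (T.orthogonalProjection)

/-- Angle between two linear subspaces: operator norm of the difference of projections. -/
def angleS {D : ℕ} (T T' : Submodule ℝ (Euc D)) : ℝ := ‖projSub T - projSub T'‖

/-- `η` is the unit outward-pointing normal of `M` at `p`:
the unit vector of `Nor(p,M) ∩ T_p M`. -/
def IsOutwardNormalAt {D : ℕ} (M : Set (Euc D)) (p η : Euc D) : Prop :=
  η ∈ normalConeAt M p ∧ η ∈ tangentSpaceAt M p ∧ ‖η‖ = 1

open MeasureTheory

def EuclideanSpace.headTail (n : ℕ) (x : EuclideanSpace ℝ (Fin (n + 1))) :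
    ℝ × EuclideanSpace ℝ (Fin n) :=
  (x 0, WithLp.toLp 2 fun j => x j.succ)

theorem EuclideanSpace.measurePreserving_headTail (n : ℕ) :
    MeasurePreserving (EuclideanSpace.headTail n) :=
  ((MeasurePreserving.id volume).prod (PiLp.volume_preserving_toLp (Fin n))).comp
    ((volume_preserving_piFinSuccAbove (fun _ => ℝ) 0).comp (PiLp.volume_preserving_ofLp _))

theorem EuclideanSpace.norm_sq_eq_headTail (n : ℕ) (x : EuclideanSpace ℝ (Fin (n + 1))) :
    ‖x‖ ^ 2 = (headTail n x).1 ^ 2 + ‖(headTail n x).2‖ ^ 2 := by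
  simp [headTail, EuclideanSpace.norm_sq_eq, Fin.sum_univ_succ]

theorem EuclideanSpace.headTail_sub_single_zero (n : ℕ) (x : EuclideanSpace ℝ (Fin (n + 1)))
    (c : ℝ) : headTail n (x - single 0 c) = ((headTail n x).1 - c, (headTail n x).2) := by
  ext <;> simp [headTail, Fin.succ_ne_zero]

theorem exists_orthonormalBasis_repr_eq_single {E ι : Type*} [NormedAddCommGroup E]
    [InnerProductSpace ℝ E] [FiniteDimensional ℝ E] [Fintype ι] [DecidableEq ι]
    (hcard : Module.finrank ℝ E = Fintype.card ι) (i : ι) (v : E) :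
    ∃ b : OrthonormalBasis ι ℝ E, b.repr v = EuclideanSpace.single i ‖v‖ := by
  rcases eq_or_ne v 0 with rfl | hv
  · exact ⟨(stdOrthonormalBasis ℝ E).reindex (Fintype.equivOfCardEq (by simpa using hcard)),
      by simp [eq_comm, PiLp.single_eq_zero_iff]⟩
  have hu : Orthonormal ℝ (({i} : Set ι).domRestrict fun _ => ‖v‖⁻¹ • v) := by
    refine ⟨fun _ => norm_smul_inv_norm hv, ?_⟩
    rintro ⟨j, rfl⟩ ⟨k, rfl⟩ hjk
    exact absurd rfl hjk
  obtain ⟨b, hb⟩ := hu.exists_orthonormalBasis_extension_of_card_eq hcard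
  have hv_eq : v = ‖v‖ • b i := by
    rw [hb i rfl, smul_smul, mul_inv_cancel₀ (norm_ne_zero_iff.2 hv), one_smul]
  refine ⟨b, ?_⟩
  rw [hv_eq, map_smul, b.repr_self, norm_smul, b.norm_eq_one,
    Real.norm_of_nonneg (norm_nonneg v), mul_one]
  ext j
  simp [PiLp.single_apply]

/-- The cross-section at first coordinate `t` of `B(0, r) ∩ B(D • e₀, r')`. -/
def lensSlice (n : ℕ) (r r' D t : ℝ) : Set (EuclideanSpace ℝ (Fin n)) :=
  {y | t ^ 2 + ‖y‖ ^ 2 ≤ r ^ 2 ∧ (t - D) ^ 2 + ‖y‖ ^ 2 ≤ r' ^ 2}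

theorem volume_closedBall_inter_closedBall_eq_lintegral {n : ℕ}
    (O O' : EuclideanSpace ℝ (Fin (n + 1))) {r r' : ℝ} (hr : 0 ≤ r) (hr' : 0 ≤ r') :
    volume (closedBall O r ∩ closedBall O' r') = ∫⁻ t, volume (lensSlice n r r' (dist O O') t) := by
  set D := dist O O'
  obtain ⟨b, hb⟩ := exists_orthonormalBasis_repr_eq_single (by simp) (0 : Fin (n + 1)) (O' - O)
  rw [← dist_eq_norm, dist_comm] at hb
  set Φ := fun x => EuclideanSpace.headTail n (b.repr (x - O))
  have hΦ : MeasurePreserving Φ :=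
    (EuclideanSpace.measurePreserving_headTail n).comp
      (b.measurePreserving_repr.comp (measurePreserving_sub_right volume O))
  set S : Set (ℝ × EuclideanSpace ℝ (Fin n)) :=
    {p | p.1 ^ 2 + ‖p.2‖ ^ 2 ≤ r ^ 2 ∧ (p.1 - D) ^ 2 + ‖p.2‖ ^ 2 ≤ r' ^ 2}
  have hS : MeasurableSet S := by
    simp only [S, setOf_and]
    exact (measurableSet_le (by fun_prop) (by fun_prop)).inter
      (measurableSet_le (by fun_prop) (by fun_prop))
  have hlens : closedBall O r ∩ closedBall O' r' = Φ ⁻¹' S := by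
    ext x
    have hO' : b.repr (x - O') = b.repr (x - O) - EuclideanSpace.single 0 D := by
      rw [← hb, ← map_sub, sub_sub_sub_cancel_right]
    have h₁ := EuclideanSpace.norm_sq_eq_headTail n (b.repr (x - O))
    have h₂ := EuclideanSpace.norm_sq_eq_headTail n (b.repr (x - O'))
    rw [b.repr.norm_map] at h₁ h₂
    rw [hO', EuclideanSpace.headTail_sub_single_zero] at h₂
    simp only [mem_inter_iff, mem_closedBall, dist_eq_norm, mem_preimage, S, mem_setOf_eq,
      ← sq_le_sq₀ (norm_nonneg _) hr, ← sq_le_sq₀ (norm_nonneg _) hr', h₁, h₂]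
    rfl
  rw [hlens, hΦ.measure_preimage hS.nullMeasurableSet, Measure.volume_eq_prod,
    Measure.prod_apply hS]
  rfl

theorem integral_cone_profile (n : ℕ) {a c : ℝ} (hac : a < c) (ℓ : ℝ) :
    ∫ t in a..c, (ℓ / (c - a) * (t - a)) ^ n = ℓ ^ n * (c - a) / (n + 1) := by
  have hca : c - a ≠ 0 := sub_ne_zero.2 hac.ne'
  simp_rw [intervalIntegral.integral_comp_sub_right (fun x => (ℓ / (c - a) * x) ^ n) a, mul_pow,
    intervalIntegral.integral_const_mul, sub_self, integral_pow, div_pow]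
  field_simp
  ring

theorem integral_cone_profile_rev (n : ℕ) {a c : ℝ} (hac : a < c) (ℓ : ℝ) :
    ∫ t in a..c, (ℓ / (c - a) * (c - t)) ^ n = ℓ ^ n * (c - a) / (n + 1) := by
  have hreflect := intervalIntegral.integral_comp_sub_left
    (fun t => (ℓ / (c - a) * (t - a)) ^ n) (a + c) (a := a) (b := c)
  simp only [add_sub_cancel_left, add_sub_cancel_right, sub_sub_cancel_left,
    add_sub_right_comm] at hreflect
  rw [← integral_cone_profile n hac ℓ, ← hreflect]
  congr with t
  ring

theorem lintegral_Ioo_ofReal_eq {g : ℝ → ℝ} {a c : ℝ} (hac : a ≤ c) (hg : Continuous g)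
    (hg₀ : ∀ t ∈ Ioo a c, 0 ≤ g t) :
    ∫⁻ t in Ioo a c, ENNReal.ofReal (g t) = ENNReal.ofReal (∫ t in a..c, g t) := by
  rw [intervalIntegral.integral_of_le hac, integral_Ioc_eq_integral_Ioo,
    ofReal_integral_eq_lintegral_ofReal]
  · exact (hg.integrableOn_Icc).mono_set Ioo_subset_Icc_self
  · filter_upwards [ae_restrict_mem measurableSet_Ioo] using hg₀

theorem ofReal_mul_le_lintegral_of_cone_profiles {n : ℕ} {f : ℝ → ℝ≥0∞} {a s c ℓ : ℝ}
    (C : ℝ≥0∞) (has : a < s) (hsc : s < c) (hℓ : 0 ≤ ℓ)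
    (hleft : ∀ t ∈ Ioo a s, ENNReal.ofReal ((ℓ / (s - a) * (t - a)) ^ n) * C ≤ f t)
    (hright : ∀ t ∈ Ioo s c, ENNReal.ofReal ((ℓ / (c - s) * (c - t)) ^ n) * C ≤ f t) :
    ENNReal.ofReal (ℓ ^ n * (c - a) / (n + 1)) * C ≤ ∫⁻ t, f t := by
  have hleft_int : ∫⁻ t in Ioo a s, ENNReal.ofReal ((ℓ / (s - a) * (t - a)) ^ n) =
      ENNReal.ofReal (ℓ ^ n * (s - a) / (n + 1)) := by
    rw [lintegral_Ioo_ofReal_eq has.le (by fun_prop), integral_cone_profile n has]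
    intro t ht
    have : 0 ≤ t - a := by linarith [ht.1]
    have : 0 ≤ s - a := by linarith
    positivity
  have hright_int : ∫⁻ t in Ioo s c, ENNReal.ofReal ((ℓ / (c - s) * (c - t)) ^ n) =
      ENNReal.ofReal (ℓ ^ n * (c - s) / (n + 1)) := by
    rw [lintegral_Ioo_ofReal_eq hsc.le (by fun_prop), integral_cone_profile_rev n hsc]
    intro t ht
    have : 0 ≤ c - t := by linarith [ht.2]
    have : 0 ≤ c - s := by linarith
    positivity
  have hsplit : ℓ ^ n * (c - a) / (n + 1) =
      ℓ ^ n * (s - a) / (n + 1) + ℓ ^ n * (c - s) / (n + 1) := by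
    ring
  have hdisj : Disjoint (Ioo a s) (Ioo s c) :=
    Ico_disjoint_Ico_same.mono Ioo_subset_Ico_self Ioo_subset_Ico_self
  calc ENNReal.ofReal (ℓ ^ n * (c - a) / (n + 1)) * C
      ≤ (ENNReal.ofReal (ℓ ^ n * (s - a) / (n + 1)) +
          ENNReal.ofReal (ℓ ^ n * (c - s) / (n + 1))) * C := by
        gcongr
        rw [hsplit]
        exact ENNReal.ofReal_add_le
    _ = (∫⁻ t in Ioo a s, ENNReal.ofReal ((ℓ / (s - a) * (t - a)) ^ n) * C) +
        ∫⁻ t in Ioo s c, ENNReal.ofReal ((ℓ / (c - s) * (c - t)) ^ n) * C := by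
        rw [lintegral_mul_const _ (by fun_prop), lintegral_mul_const _ (by fun_prop),
          hleft_int, hright_int, add_mul]
    _ ≤ (∫⁻ t in Ioo a s, f t) + ∫⁻ t in Ioo s c, f t :=
        add_le_add (setLIntegral_mono' measurableSet_Ioo hleft)
          (setLIntegral_mono' measurableSet_Ioo hright)
    _ = ∫⁻ t in Ioo a s ∪ Ioo s c, f t := (lintegral_union measurableSet_Ioo hdisj).symm
    _ ≤ ∫⁻ t, f t := setLIntegral_le_lintegral _ _

theorem ofReal_pow_mul_volume_ball_le_volume_lensSlice {n : ℕ} {r r' D t ρ : ℝ} (hρ : 0 ≤ ρ)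
    (h₁ : ρ ^ 2 ≤ r ^ 2 - t ^ 2) (h₂ : ρ ^ 2 ≤ r' ^ 2 - (t - D) ^ 2) :
    ENNReal.ofReal (ρ ^ n) * volume (ball (0 : EuclideanSpace ℝ (Fin n)) 1) ≤
      volume (lensSlice n r r' D t) := by
  have hball := Measure.addHaar_closedBall volume (0 : EuclideanSpace ℝ (Fin n)) hρ
  rw [finrank_euclideanSpace_fin] at hball
  rw [← hball]
  refine measure_mono fun y hy => ?_
  have hy : ‖y‖ ^ 2 ≤ ρ ^ 2 := pow_le_pow_left₀ (norm_nonneg y) (mem_closedBall_zero_iff.1 hy) 2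
  exact ⟨by linarith, by linarith⟩

theorem cone_profile_sq_le_sq {u u₀ : ℝ} (ℓ : ℝ) (hu : 0 ≤ u) (huu₀ : u ≤ u₀) :
    (ℓ / u₀ * u) ^ 2 ≤ ℓ ^ 2 := by
  rcases hu.trans huu₀ |>.eq_or_lt with rfl | hu₀
  · simp [sq_nonneg]
  rw [div_mul_eq_mul_div, div_pow, div_le_iff₀ (by positivity), mul_pow]
  exact mul_le_mul_of_nonneg_left (pow_le_pow_left₀ hu huu₀ 2) (sq_nonneg ℓ)

/-- Concavity of `(t - a) * (b - t)` on `[a, s]`, written with `u = t - a`, `u₀ = s - a`,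
`w = b - t` and `w₀ = b - s`. -/
theorem cone_profile_sq_le_mul {u u₀ w w₀ ℓ : ℝ} (hu : 0 ≤ u) (huu₀ : u ≤ u₀) (hww₀ : w₀ ≤ w)
    (hℓ : ℓ ^ 2 ≤ u₀ * w₀) :
    (ℓ / u₀ * u) ^ 2 ≤ u * w := by
  rcases hu.trans huu₀ |>.eq_or_lt with rfl | hu₀
  · simp [le_antisymm huu₀ hu]
  rw [div_mul_eq_mul_div, div_pow, div_le_iff₀ (by positivity)]
  nlinarith [mul_le_mul_of_nonneg_left hℓ (sq_nonneg u), mul_nonneg hu (sub_nonneg.2 huu₀),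
    mul_nonneg (mul_nonneg hu hu₀.le) (sub_nonneg.2 hww₀)]

/-- Abscissa of the circle `∂B(0, r) ∩ ∂B(D • e₀, r')` (the paper's point `Ω`). -/
def lensChordAbscissa (r r' D : ℝ) : ℝ := (D ^ 2 + r ^ 2 - r' ^ 2) / (2 * D)

theorem sq_sub_sq_lensChordAbscissa {r r' D : ℝ} (hD : D ≠ 0) :
    r ^ 2 - lensChordAbscissa r r' D ^ 2 = r' ^ 2 - (lensChordAbscissa r r' D - D) ^ 2 := by
  unfold lensChordAbscissa
  field_simp
  ring

theorem lensChordAbscissa_mem_Ioo {r r' h : ℝ} (hh : 0 < h) (hhr' : h ≤ r') (hr'r : r' ≤ r) :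
    lensChordAbscissa r r' (r + r' - h) ∈ Ioo (r - h) r := by
  unfold lensChordAbscissa
  constructor
  · rw [lt_div_iff₀ (by linarith)]
    nlinarith
  · rw [div_lt_iff₀ (by linarith)]
    nlinarith

theorem mul_div_two_le_sq_sub_sq_lensChordAbscissa {r r' h : ℝ} (hh : 0 < h) (hhr' : h ≤ r')
    (hr'r : r' ≤ r) : h * r' / 2 ≤ r ^ 2 - lensChordAbscissa r r' (r + r' - h) ^ 2 := by
  set D := r + r' - h
  have hD : 0 < D := by linarith
  have hid : (r ^ 2 - lensChordAbscissa r r' D ^ 2) * (2 * D) ^ 2 =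
      h * ((2 * r + 2 * r' - h) * (2 * r' - h) * (2 * r - h)) := by
    unfold lensChordAbscissa
    field_simp
    ring
  have hpoly : 2 * r' * D ^ 2 ≤ (2 * r + 2 * r' - h) * (2 * r' - h) * (2 * r - h) := by
    nlinarith [mul_nonneg (sub_nonneg.2 hr'r) (by linarith : (0:ℝ) ≤ r + r'),
      mul_nonneg hh.le (by linarith : (0:ℝ) ≤ 2 * r' - h)]
  refine le_of_mul_le_mul_right ?_ (by positivity : 0 < (2 * D) ^ 2)
  rw [hid]
  nlinarith

theorem ofReal_mul_volume_ball_le_volume_closedBall_inter {n : ℕ}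
    (O O' : EuclideanSpace ℝ (Fin (n + 1))) {r r' h ℓ : ℝ} (hh : 0 < h) (hhr' : h ≤ r')
    (hr'r : r' ≤ r) (hdist : dist O O' = r + r' - h) (hℓ : 0 ≤ ℓ) (hℓr' : ℓ ^ 2 ≤ h * r' / 2) :
    ENNReal.ofReal (ℓ ^ n * h / (n + 1)) * volume (ball (0 : EuclideanSpace ℝ (Fin n)) 1) ≤
      volume (closedBall O r ∩ closedBall O' r') := by
  set t₀ := lensChordAbscissa r r' (r + r' - h)
  obtain ⟨hat₀, ht₀r⟩ := lensChordAbscissa_mem_Ioo hh hhr' hr'r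
  have hℓ₁ : ℓ ^ 2 ≤ r ^ 2 - t₀ ^ 2 :=
    hℓr'.trans (mul_div_two_le_sq_sub_sq_lensChordAbscissa hh hhr' hr'r)
  have hℓ₂ : ℓ ^ 2 ≤ r' ^ 2 - (t₀ - (r + r' - h)) ^ 2 :=
    hℓ₁.trans_eq (sq_sub_sq_lensChordAbscissa (by linarith))
  rw [volume_closedBall_inter_closedBall_eq_lintegral O O' (by linarith) (by linarith), hdist]
  conv_lhs => rw [← sub_sub_cancel r h]
  refine ofReal_mul_le_lintegral_of_cone_profiles _ hat₀ ht₀r hℓ (fun t ⟨hat, htt₀⟩ => ?_)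
    (fun t ⟨ht₀t, htr⟩ => ?_)
  · refine ofReal_pow_mul_volume_ball_le_volume_lensSlice
      (mul_nonneg (div_nonneg hℓ (by linarith)) (by linarith)) ?_ ?_
    · have : t ^ 2 ≤ t₀ ^ 2 := by nlinarith
      have := cone_profile_sq_le_sq ℓ (u := t - (r - h)) (u₀ := t₀ - (r - h))
        (by linarith) (by linarith)
      linarith
    · have := cone_profile_sq_le_mul (u := t - (r - h)) (u₀ := t₀ - (r - h))
        (w := r + r' - h + r' - t) (w₀ := r + r' - h + r' - t₀) (by linarith) (by linarith)
        (by linarith) (hℓ₂.trans_eq (by ring))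
      linarith
  · refine ofReal_pow_mul_volume_ball_le_volume_lensSlice
      (mul_nonneg (div_nonneg hℓ (by linarith)) (by linarith)) ?_ ?_
    · have := cone_profile_sq_le_mul (u := r - t) (u₀ := r - t₀) (w := r + t) (w₀ := r + t₀)
        (by linarith) (by linarith) (by linarith) (hℓ₁.trans_eq (by ring))
      linarith
    · have : (t - (r + r' - h)) ^ 2 ≤ (t₀ - (r + r' - h)) ^ 2 := by nlinarith
      have := cone_profile_sq_le_sq ℓ (u := r - t) (u₀ := r - t₀) (by linarith) (by linarith)
      linarith

theorem stmt_6_general {d : ℕ} (r rp h : ℝ) (hrr : rp ≤ r)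
    (O Op : EuclideanSpace ℝ (Fin d)) (hh0 : 0 ≤ h) (hh : h ≤ rp)
    (hdist : ‖O - Op‖ = r + rp - h) :
    ENNReal.ofReal
        ((MeasureTheory.volume (Metric.ball (0 : EuclideanSpace ℝ (Fin (d - 1))) 1)).toReal /
            ((d : ℝ) * 2 ^ (((d : ℝ) - 1) / 2)) * h ^ (((d : ℝ) + 1) / 2) *
          rp ^ (((d : ℝ) - 1) / 2)) ≤
      MeasureTheory.volume (Metric.closedBall O r ∩ Metric.closedBall Op rp) := by
  rcases hh0.eq_or_lt with rfl | hh0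
  · simp [Real.zero_rpow (by positivity : ((d : ℝ) + 1) / 2 ≠ 0)]
  rcases d with _ | n
  · simp
  set ω := volume (ball (0 : EuclideanSpace ℝ (Fin n)) 1)
  have hrp : 0 ≤ rp := hh0.le.trans hh
  have hrpow : ω.toReal / (((n + 1 : ℕ) : ℝ) * 2 ^ ((((n + 1 : ℕ) : ℝ) - 1) / 2)) *
      h ^ ((((n + 1 : ℕ) : ℝ) + 1) / 2) * rp ^ ((((n + 1 : ℕ) : ℝ) - 1) / 2) =
      √(h * rp / 2) ^ n * h / (n + 1) * ω.toReal := by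
    push_cast
    rw [add_sub_cancel_right, show ((n : ℝ) + 1 + 1) / 2 = n / 2 + 1 by ring,
      Real.rpow_add_one hh0.ne', Real.sqrt_eq_rpow, ← Real.rpow_mul_natCast (by positivity),
      Real.div_rpow (by positivity) zero_le_two, Real.mul_rpow hh0.le hrp]
    field_simp
  rw [hrpow, ENNReal.ofReal_mul (by positivity), ENNReal.ofReal_toReal measure_ball_lt_top.ne]
  exact ofReal_mul_volume_ball_le_volume_closedBall_inter O Op hh0 hh hrr
    (by rw [dist_eq_norm, hdist]) (Real.sqrt_nonneg _) (Real.sq_sqrt (by positivity)).le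

theorem stmt_6 {d : ℕ} (hd : 1 ≤ d) (r rp h : ℝ) (hrp : 0 ≤ rp) (hrr : rp ≤ r)
    (O Op : EuclideanSpace ℝ (Fin d)) (hh0 : 0 ≤ h) (hh : h ≤ rp)
    (hdist : ‖O - Op‖ = r + rp - h) :
    ENNReal.ofReal
        ((MeasureTheory.volume (Metric.ball (0 : EuclideanSpace ℝ (Fin (d - 1))) 1)).toReal /
            ((d : ℝ) * 2 ^ (((d : ℝ) - 1) / 2)) * h ^ (((d : ℝ) + 1) / 2) *
          rp ^ (((d : ℝ) - 1) / 2)) ≤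
      MeasureTheory.volume (Metric.closedBall O r ∩ Metric.closedBall Op rp) :=
  stmt_6_general r rp h hrr O Op hh0 hh hdist
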